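/- Let μ_α be a discounted holonomic stationary Mather measure constructed as a limit of occupation measures of minimizing trajectories x_n on [0, T_n] with T_n → ∞ and |ẋ_n| uniformly bounded. Then μ_α is invariant under the discounted Euler–Lagrange flow: for every bounded φ ∈ C¹_s(ℝⁿ × ℝⁿ × Ω) with bounded derivatives, ∫ W^{L_α}(0, v, ω) · ∇_{x,v} φ(0, v, ω) dμ_α(v, ω) = 0, where W^{L_α} = (v, (D²_{vv}L)^{-1}(D_x L + α D_v L − D²_{xv}L v)). The proof identity is: φ(x_n(T_n), ẋ_n(T_n), ω) − φ(x_n(0), ẋ_n(0), ω) = ∫₀^{T_n} (X^{L_α} ∂φ/∂x + Y^{L_α} ∂φ/∂v) dt along trajectories of the discounted Euler–Lagrange equation, and dividing by T_n gives 0 in the limit. -/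

import Mathlib

/-!
Along a trajectory of the flow, stationarity of `φ` and of the vector field turns the chain rule
into `d/dt φ(x, ẋ, ω₀) = W · ∇φ (0, ẋ, τ_x ω₀)`, so the occupation average of the integrand over
`[0, T]` is `(φ(end) - φ(start)) / T = O(1/T)`. The integrand is unbounded in `v`, but since
`|ẋ| ≤ C` the limit measure lives on the compact set `{|v| ≤ C} × Ω`, where the integrand agrees
with a bounded continuous function (Tietze), to which weak convergence applies.
-/

open Filter MeasureTheory Set Metric Topology BoundedContinuousFunction

def IsOccupationLimit {X : Type*} [TopologicalSpace X] [MeasurableSpace X]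
    (γ : ℕ → ℝ → X) (T : ℕ → ℝ) (μ : Measure X) : Prop :=
  ∀ f : X →ᵇ ℝ, Tendsto (fun m => (T m)⁻¹ * ∫ t in Ioc 0 (T m), f (γ m t)) atTop
    (𝓝 (∫ q, f q ∂μ))

theorem IsOccupationLimit.ae_mem {X : Type*} [PseudoMetricSpace X] [MeasurableSpace X]
    [OpensMeasurableSpace X] {γ : ℕ → ℝ → X} {T : ℕ → ℝ} {μ : Measure X} [IsFiniteMeasure μ]
    (h : IsOccupationLimit γ T μ) {K : Set X} (hK : IsClosed K) (hγ : ∀ m t, γ m t ∈ K) :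
    ∀ᵐ q ∂μ, q ∈ K := by
  set d : X →ᵇ ℝ := .ofNormedAddCommGroup (fun q => min (infDist q K) 1)
    ((continuous_infDist_pt K).min continuous_const) 1 fun q => by
      rw [Real.norm_of_nonneg (le_min infDist_nonneg zero_le_one)]
      exact min_le_right _ _
  have hd_nonneg : 0 ≤ ⇑d := fun q => le_min infDist_nonneg zero_le_one
  have hd_zero : ∫ q, d q ∂μ = 0 := by
    refine tendsto_nhds_unique (h d) ?_
    simp only [d, BoundedContinuousFunction.coe_ofNormedAddCommGroup,
      infDist_zero_of_mem (hγ _ _), min_eq_left zero_le_one, integral_zero, mul_zero,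
      tendsto_const_nhds]
  filter_upwards [(integral_eq_zero_iff_of_nonneg hd_nonneg (d.integrable μ)).1 hd_zero]
    with q hq
  refine (hK.mem_iff_infDist_zero ⟨_, hγ 0 0⟩).2 ?_
  rcases min_eq_iff.1 hq with ⟨hdist, -⟩ | ⟨hone, -⟩
  exacts [hdist, absurd hone one_ne_zero]

theorem tendsto_inv_mul_integral_deriv_zero {h h' : ℕ → ℝ → ℝ} {T : ℕ → ℝ}
    (hT : Tendsto T atTop atTop) (hderiv : ∀ m t, HasDerivAt (h m) (h' m t) t)
    {B B' : ℝ} (hB : ∀ m t, |h m t| ≤ B) (hB' : ∀ m t, |h' m t| ≤ B') :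
    Tendsto (fun m => (T m)⁻¹ * ∫ t in Ioc 0 (T m), h' m t) atTop (𝓝 0) := by
  have hbound : Tendsto (fun m => (T m)⁻¹ * (2 * B)) atTop (𝓝 0) := by
    simpa using (tendsto_inv_atTop_zero.comp hT).mul_const (2 * B)
  refine squeeze_zero_norm' ?_ hbound
  filter_upwards [hT.eventually_gt_atTop 0] with m hTm
  -- a derivative is always measurable, so boundedness alone gives integrability
  have hmeas : Measurable (h' m) := by
    rw [show h' m = deriv (h m) from funext fun t => (hderiv m t).deriv.symm]
    exact measurable_deriv _
  have hint : IntervalIntegrable (h' m) volume 0 (T m) :=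
    (intervalIntegrable_iff_integrableOn_Ioc_of_le hTm.le).2 <|
      Measure.integrableOn_of_bounded measure_Ioc_lt_top.ne hmeas.aestronglyMeasurable
        (M := B') (ae_of_all _ fun t => hB' m t)
  have hftc : ∫ t in Ioc 0 (T m), h' m t = h m (T m) - h m 0 := by
    rw [← intervalIntegral.integral_of_le hTm.le]
    exact intervalIntegral.integral_eq_sub_of_hasDerivAt (fun t _ => hderiv m t) hint
  rw [hftc, norm_mul, Real.norm_of_nonneg (inv_nonneg.2 hTm.le)]
  gcongr
  calc ‖h m (T m) - h m 0‖ ≤ |h m (T m)| + |h m 0| := norm_sub_le _ _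
    _ ≤ 2 * B := by linarith [hB m (T m), hB m 0]

theorem BoundedContinuousFunction.exists_eqOn_of_isCompact {X : Type*} [TopologicalSpace X]
    [NormalSpace X] [T2Space X] {K : Set X} (hK : IsCompact K) {g : X → ℝ}
    (hg : ContinuousOn g K) : ∃ F : X →ᵇ ℝ, EqOn F g K := by
  have := isCompact_iff_compactSpace.1 hK
  obtain ⟨F, -, hF⟩ := exists_norm_eq_domRestrict_eq_of_closed
    (mkOfCompact ⟨K.domRestrict g, hg.domRestrict⟩) hK.isClosed
  exact ⟨F, fun q hq => DFunLike.congr_fun hF ⟨q, hq⟩⟩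

def IsStationaryFun {E V Ω β : Type*} [Add E] (τ : E → Ω → Ω) (f : E → V → Ω → β) : Prop :=
  ∀ x y v ω, f (x + y) v ω = f x v (τ y ω)

namespace IsStationaryFun

variable {E V Ω β : Type*}

theorem apply_eq [AddZeroClass E] {τ : E → Ω → Ω} {f : E → V → Ω → β}
    (hf : IsStationaryFun τ f) (x : E) (v : V) (ω : Ω) : f x v ω = f 0 v (τ x ω) := by
  simpa using hf 0 x v ω

theorem of_hasFDerivAt {𝕜 G : Type*} [NontriviallyNormedField 𝕜] [NormedAddCommGroup E]
    [NormedSpace 𝕜 E] [NormedAddCommGroup V] [NormedSpace 𝕜 V] [NormedAddCommGroup G]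
    [NormedSpace 𝕜 G] {τ : E → Ω → Ω} {f : E → V → Ω → G} {Df : E → V → Ω → (E × V →L[𝕜] G)}
    (hf : IsStationaryFun τ f)
    (hDf : ∀ x v ω, HasFDerivAt (fun q : E × V => f q.1 q.2 ω) (Df x v ω) (x, v)) :
    IsStationaryFun τ Df := by
  intro x y v ω
  have hshift : HasFDerivAt (fun q : E × V => f (q + (y, 0)).1 (q + (y, 0)).2 ω)
      (Df (x + y) v ω) (x, v) :=
    (hasFDerivAt_comp_add_right (f := fun q : E × V => f q.1 q.2 ω) (y, (0 : V))).2
      (by simpa using hDf (x + y) v ω)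
  simp only [Prod.fst_add, Prod.snd_add, add_zero, hf _ y _ ω] at hshift
  exact hshift.unique (hDf x v (τ y ω))

end IsStationaryFun

theorem stmt_16_general {n : ℕ} {Ω : Type*} [MetricSpace Ω] [CompactSpace Ω]
    [MeasurableSpace Ω] [BorelSpace Ω]
    (τ : EuclideanSpace ℝ (Fin n) → Ω → Ω)
    -- the (discounted) Euler–Lagrange vector field W^{L_α} = (v, Y(x,v,ω))
    (Y : EuclideanSpace ℝ (Fin n) → EuclideanSpace ℝ (Fin n) → Ω →
      EuclideanSpace ℝ (Fin n))
    (hYcont : Continuous fun q : EuclideanSpace ℝ (Fin n) ×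
      EuclideanSpace ℝ (Fin n) × Ω => Y q.1 q.2.1 q.2.2)
    (hYstat : ∀ x y v ω, Y (x + y) v ω = Y x v (τ y ω))
    (ω₀ : Ω) (T : ℕ → ℝ) (hT : Tendsto T atTop atTop)
    (x v : ℕ → ℝ → EuclideanSpace ℝ (Fin n))
    -- minimizing trajectories solve the discounted Euler–Lagrange equations
    (hode₁ : ∀ m t, HasDerivAt (x m) (v m t) t)
    (hode₂ : ∀ m t, HasDerivAt (v m) (Y (x m t) (v m t) ω₀) t)
    (C : ℝ) (hvbd : ∀ m t, ‖v m t‖ ≤ C)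
    (μα : Measure (EuclideanSpace ℝ (Fin n) × Ω)) [IsProbabilityMeasure μα]
    (hconv : ∀ f : BoundedContinuousFunction (EuclideanSpace ℝ (Fin n) × Ω) ℝ,
      Tendsto (fun m => (T m)⁻¹ *
          ∫ t in Set.Ioc (0 : ℝ) (T m), f (v m t, τ (x m t) ω₀))
        atTop (nhds (∫ q, f q ∂μα))) :
    ∀ (φ : EuclideanSpace ℝ (Fin n) → EuclideanSpace ℝ (Fin n) → Ω → ℝ)
      (Dφ : EuclideanSpace ℝ (Fin n) → EuclideanSpace ℝ (Fin n) → Ω →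
        (EuclideanSpace ℝ (Fin n) × EuclideanSpace ℝ (Fin n) →L[ℝ] ℝ)),
      (∀ a y w ω, φ (a + y) w ω = φ a w (τ y ω)) →
      (∀ a w, Continuous (φ a w)) →
      (∀ a w ω, HasFDerivAt
        (fun q : EuclideanSpace ℝ (Fin n) × EuclideanSpace ℝ (Fin n) =>
          φ q.1 q.2 ω) (Dφ a w ω) (a, w)) →
      Continuous (fun q : EuclideanSpace ℝ (Fin n) ×
        EuclideanSpace ℝ (Fin n) × Ω => Dφ q.1 q.2.1 q.2.2) →
      (∃ B, ∀ a w ω, |φ a w ω| ≤ B) →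
      (∃ B', ∀ a w ω, ‖Dφ a w ω‖ ≤ B') →
      ∫ q, Dφ 0 q.1 q.2 (q.1, Y 0 q.1 q.2) ∂μα = 0 := by
  rintro φ Dφ hφstat - hφderiv hDφcont ⟨B, hB⟩ -
  have hDφstat : IsStationaryFun τ Dφ := IsStationaryFun.of_hasFDerivAt hφstat hφderiv
  set K : Set (EuclideanSpace ℝ (Fin n) × Ω) := closedBall 0 C ×ˢ univ
  have hγK : ∀ m t, (v m t, τ (x m t) ω₀) ∈ K := fun m t =>
    ⟨mem_closedBall_zero_iff.2 (hvbd m t), mem_univ _⟩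
  have hK : IsCompact K := (isCompact_closedBall 0 C).prod isCompact_univ
  obtain ⟨F, hF⟩ := BoundedContinuousFunction.exists_eqOn_of_isCompact hK
    (g := fun q => Dφ 0 q.1 q.2 (q.1, Y 0 q.1 q.2)) (by fun_prop)
  have hderiv : ∀ m t, HasDerivAt (fun t => φ (x m t) (v m t) ω₀)
      (F (v m t, τ (x m t) ω₀)) t := fun m t => by
    have := (hφderiv _ _ ω₀).comp_hasDerivAt t ((hode₁ m t).prodMk (hode₂ m t))
    rw [hDφstat.apply_eq, IsStationaryFun.apply_eq hYstat] at this
    exact (hF (hγK m t)).symm ▸ this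
  have hocc : IsOccupationLimit (fun m t => (v m t, τ (x m t) ω₀)) T μα := hconv
  calc ∫ q, Dφ 0 q.1 q.2 (q.1, Y 0 q.1 q.2) ∂μα = ∫ q, F q ∂μα :=
        integral_congr_ae ((hocc.ae_mem hK.isClosed hγK).mono
          fun q hq => (hF hq).symm)
    _ = 0 := tendsto_nhds_unique (hocc F) <| tendsto_inv_mul_integral_deriv_zero hT hderiv
        (fun _ _ => hB _ _ _) (fun _ _ => F.norm_coe_le_norm _)

/-- A discounted holonomic stationary Mather measure, obtained as a limit of
occupation measures of minimizing trajectories of the discounted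
Euler–Lagrange flow `(ẋ, ẍ) = W^{L_α}(x, ẋ, ω) = (v, Y(x, v, ω))`, is
invariant under that flow: for every bounded stationary `C¹` function `φ` with
bounded derivative, `∫ W^{L_α}(0,v,ω) · ∇_{x,v} φ(0,v,ω) dμ_α = 0`. -/
theorem stmt_16 {n : ℕ} {Ω : Type*} [MetricSpace Ω] [CompactSpace Ω]
    [MeasurableSpace Ω] [BorelSpace Ω]
    (τ : EuclideanSpace ℝ (Fin n) → Ω → Ω)
    (hτcont : Continuous fun q : EuclideanSpace ℝ (Fin n) × Ω => τ q.1 q.2)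
    (hadd : ∀ x y ω, τ (x + y) ω = τ x (τ y ω)) (hzero : ∀ ω, τ 0 ω = ω)
    -- the (discounted) Euler–Lagrange vector field W^{L_α} = (v, Y(x,v,ω))
    (Y : EuclideanSpace ℝ (Fin n) → EuclideanSpace ℝ (Fin n) → Ω →
      EuclideanSpace ℝ (Fin n))
    (hYcont : Continuous fun q : EuclideanSpace ℝ (Fin n) ×
      EuclideanSpace ℝ (Fin n) × Ω => Y q.1 q.2.1 q.2.2)
    (hYstat : ∀ x y v ω, Y (x + y) v ω = Y x v (τ y ω))
    (ω₀ : Ω) (T : ℕ → ℝ) (hT : Tendsto T atTop atTop)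
    (x v : ℕ → ℝ → EuclideanSpace ℝ (Fin n))
    -- minimizing trajectories solve the discounted Euler–Lagrange equations
    (hode₁ : ∀ m t, HasDerivAt (x m) (v m t) t)
    (hode₂ : ∀ m t, HasDerivAt (v m) (Y (x m t) (v m t) ω₀) t)
    (C : ℝ) (hvbd : ∀ m t, ‖v m t‖ ≤ C)
    (μα : Measure (EuclideanSpace ℝ (Fin n) × Ω)) [IsProbabilityMeasure μα]
    (hconv : ∀ f : BoundedContinuousFunction (EuclideanSpace ℝ (Fin n) × Ω) ℝ,
      Tendsto (fun m => (T m)⁻¹ *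
          ∫ t in Set.Ioc (0 : ℝ) (T m), f (v m t, τ (x m t) ω₀))
        atTop (nhds (∫ q, f q ∂μα))) :
    ∀ (φ : EuclideanSpace ℝ (Fin n) → EuclideanSpace ℝ (Fin n) → Ω → ℝ)
      (Dφ : EuclideanSpace ℝ (Fin n) → EuclideanSpace ℝ (Fin n) → Ω →
        (EuclideanSpace ℝ (Fin n) × EuclideanSpace ℝ (Fin n) →L[ℝ] ℝ)),
      (∀ a y w ω, φ (a + y) w ω = φ a w (τ y ω)) →
      (∀ a w, Continuous (φ a w)) →
      (∀ a w ω, HasFDerivAt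
        (fun q : EuclideanSpace ℝ (Fin n) × EuclideanSpace ℝ (Fin n) =>
          φ q.1 q.2 ω) (Dφ a w ω) (a, w)) →
      Continuous (fun q : EuclideanSpace ℝ (Fin n) ×
        EuclideanSpace ℝ (Fin n) × Ω => Dφ q.1 q.2.1 q.2.2) →
      (∃ B, ∀ a w ω, |φ a w ω| ≤ B) →
      (∃ B', ∀ a w ω, ‖Dφ a w ω‖ ≤ B') →
      ∫ q, Dφ 0 q.1 q.2 (q.1, Y 0 q.1 q.2) ∂μα = 0 :=
  stmt_16_general τ Y hYcont hYstat ω₀ T hT x v hode₁ hode₂ C hvbd μα hconv
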